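/- Let (X,d,μ) be a space of homogeneous type with open balls, and let E ⊆ X be weakly porous with respect to the Macías–Segovia quasi-distance δ with doubling ρ_{δ,E}. Then μ(closure(E)) = 0. -/

import Mathlib

/-!
Fix a ball `B₀ = B(x₀,r₀)`. Weak porosity gives a hole `B(c,ρ) ⊆ B₀ \ E`, and doubling of
`ρ_{δ,E}` turns it into holes of size `ρ/C^m` in all balls of radius `βt` centred in `B₀`.
Around each point `x` of `S_{T'} = {x ∈ B₀ : δ(x,E) < T'}`, weak porosity in an interior ball
of `B(x,t)` yields a set inside `S_T \ S_{T'}` (with `T = 2Kt`) carrying a fixed proportion of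
`μ(B(x,2Kt))`. A Vitali selection of such balls gives `μ(S_{T'}) ≤ q μ(S_T)` with `q < 1`
independent of `T`, and iterating gives `μ(closure E ∩ B₀) ≤ q^k μ(B₀) → 0`. Doubling of `μ`
passes from `d`-balls to `δ`-balls because `δ ≤ d ≤ 3K²δ`.
-/

open MeasureTheory ENNReal Set

namespace WPA1

variable {X : Type*}

/-- `d` is a quasi-distance on `X` with triangular constant `K`. -/
def QD (d : X → X → ℝ) (K : ℝ) : Prop :=
  1 ≤ K ∧ (∀ x y, 0 ≤ d x y) ∧ (∀ x y, d x y = 0 ↔ x = y) ∧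
    (∀ x y, d x y = d y x) ∧ ∀ x y z, d x z ≤ K * (d x y + d y z)

/-- The `d`-ball of center `x` and radius `r`. -/
def ball (d : X → X → ℝ) (x : X) (r : ℝ) : Set X := {y | d x y < r}

/-- The optimal (least) triangular constant of `d`. -/
noncomputable def Kopt (d : X → X → ℝ) : ℝ := sInf {K | QD d K}

/-- Distance from a point to a set: `d(x,E) = inf_{e ∈ E} d(x,e)`. -/
noncomputable def distE (d : X → X → ℝ) (E : Set X) (x : X) : ℝ :=
  sInf ((d x) '' E)

/-- The maximal `E`-free hole function
`ρ_{d,E}(B_d(x,r)) = sup {0 < s ≤ 2Kr : ∃ y, B_d(y,s) ⊆ B_d(x,r) \ E}`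
(with value `0` when the set is empty, by `Real.sSup` conventions). -/
noncomputable def hole (d : X → X → ℝ) (K : ℝ) (E : Set X) (x : X) (r : ℝ) : ℝ :=
  sSup {s | 0 < s ∧ s ≤ 2 * K * r ∧ ∃ y, ball d y s ⊆ ball d x r \ E}

/-- The maximal hole function `ρ_{d,E}` is doubling with constant `C`. -/
def HoleDoubling (d : X → X → ℝ) (K : ℝ) (E : Set X) (C : ℝ) : Prop :=
  ∀ x r, 0 < r → hole d K E x (2 * r) ≤ C * hole d K E x r

/-- The `d`-balls are open and form neighborhood bases: the ambient topology is
the one induced by the quasi-distance `d`. -/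
def BallsBasis [TopologicalSpace X] (d : X → X → ℝ) : Prop :=
  (∀ x r, IsOpen (ball d x r)) ∧ ∀ x, ∀ U ∈ nhds x, ∃ r > 0, ball d x r ⊆ U

/-- The measure `μ` is doubling (with constant `A`) on `d`-balls, which have
positive finite measure; i.e. `(X,d,μ)` is a space of homogeneous type. -/
def DoublingBalls [MeasurableSpace X] (μ : Measure X) (d : X → X → ℝ) (A : ℝ) : Prop :=
  ∀ x r, 0 < r → 0 < μ (ball d x r) ∧ μ (ball d x r) < ⊤ ∧
    μ (ball d x (2 * r)) ≤ ENNReal.ofReal A * μ (ball d x r)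

/-- `E` is `(σ,γ)`-weakly porous with respect to `d` and `μ`. -/
def WeaklyPorousWith [MeasurableSpace X] (μ : Measure X) (d : X → X → ℝ) (K : ℝ)
    (E : Set X) (σ γ : ℝ) : Prop :=
  ∀ x r, 0 < r → ∃ (n : ℕ) (c : Fin n → X) (ρ : Fin n → ℝ),
    (∀ i j, i ≠ j → Disjoint (ball d (c i) (ρ i)) (ball d (c j) (ρ j))) ∧
    (∀ i, ball d (c i) (ρ i) ⊆ ball d x r \ E) ∧
    (∀ i, γ * hole d K E x r ≤ ρ i) ∧
    (∀ i, ρ i ≤ 2 * K * r) ∧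
    ENNReal.ofReal σ * μ (ball d x r) ≤ ∑ i, μ (ball d (c i) (ρ i))

/-- `E` is weakly porous with respect to `d` and `μ`. -/
def WeaklyPorous [MeasurableSpace X] (μ : Measure X) (d : X → X → ℝ) (K : ℝ)
    (E : Set X) : Prop :=
  ∃ σ γ : ℝ, σ ∈ Set.Ioo (0:ℝ) 1 ∧ γ ∈ Set.Ioo (0:ℝ) 1 ∧ WeaklyPorousWith μ d K E σ γ

/-- The weight `d(·,E)^{-α}`, valued in `ℝ≥0∞` (so it is `∞` on `{d(·,E)=0}`). -/
noncomputable def wgt (d : X → X → ℝ) (E : Set X) (α : ℝ) (x : X) : ℝ≥0∞ :=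
  ENNReal.ofReal (distE d E x) ^ (-α)

/-- `w` is an `A₁(X,d,μ)`-weight: `w` is locally integrable and the mean value of `w`
over every `d`-ball is bounded by a constant times its essential infimum there. -/
def MemA1 [MeasurableSpace X] (μ : Measure X) (d : X → X → ℝ) (w : X → ℝ≥0∞) : Prop :=
  (∀ x r, 0 < r → ∫⁻ y in ball d x r, w y ∂μ < ⊤) ∧
  ∃ C : ℝ, 0 < C ∧ ∀ x r, 0 < r →
    ∫⁻ y in ball d x r, w y ∂μ ≤
      ENNReal.ofReal C * essInf w (μ.restrict (ball d x r)) * μ (ball d x r)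

def InteriorBalls (d : X → X → ℝ) (K β : ℝ) : Prop :=
  ∀ x r t y, 0 < r → 0 < t → t ≤ 2 * K * r → y ∈ ball d x r →
    ∃ z, ball d z (β * t) ⊆ ball d y t ∩ ball d x r

open Filter Topology

lemma exists_le_two_pow_mul (a : ℝ) {b : ℝ} (hb : 0 < b) : ∃ m : ℕ, a ≤ 2 ^ m * b := by
  obtain ⟨m, hm⟩ := pow_unbounded_of_one_lt (a / b) one_lt_two
  exact ⟨m, ((div_lt_iff₀ hb).1 hm).le⟩

lemma le_div_add_mul_of_add_mul_le {a s x y : ℝ≥0∞} (ha : a ≠ ∞) (hs : s ≠ 0) (hs' : s ≠ ∞)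
    (h : (a + s) * x ≤ a * y) : x ≤ a / (a + s) * y := by
  rw [← ENNReal.mul_div_right_comm, ENNReal.le_div_iff_mul_le (Or.inl (by simp [hs]))
    (Or.inl (ENNReal.add_ne_top.2 ⟨ha, hs'⟩)), mul_comm]
  exact h

lemma ball_mono {d : X → X → ℝ} {x : X} {r r' : ℝ} (h : r ≤ r') : ball d x r ⊆ ball d x r' :=
  fun _ hy => lt_of_lt_of_le hy h

namespace QD

variable {d : X → X → ℝ} {K : ℝ}

lemma pos (hK : QD d K) : 0 < K := one_pos.trans_le hK.1

lemma nonneg (hK : QD d K) (x y : X) : 0 ≤ d x y := hK.2.1 x y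

lemma apply_self (hK : QD d K) (x : X) : d x x = 0 := (hK.2.2.1 x x).2 rfl

lemma comm (hK : QD d K) (x y : X) : d x y = d y x := hK.2.2.2.1 x y

lemma triangle (hK : QD d K) (x y z : X) : d x z ≤ K * (d x y + d y z) := hK.2.2.2.2 x y z

lemma triangle_lt (hK : QD d K) {x y z : X} {t : ℝ} (hxy : d x y < t) (hyz : d y z < t) :
    d x z < 2 * K * t := by
  have := mul_lt_mul_of_pos_left (add_lt_add hxy hyz) hK.pos
  linarith [hK.triangle x y z]

lemma mem_ball_self (hK : QD d K) {x : X} {r : ℝ} (hr : 0 < r) : x ∈ ball d x r := by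
  simpa [ball, hK.apply_self] using hr

lemma ball_subset_ball (hK : QD d K) {x z : X} {ε s : ℝ} (h : d x z < ε) :
    ball d z s ⊆ ball d x (K * (ε + s)) := fun w hw =>
  (hK.triangle x z w).trans_lt (mul_lt_mul_of_pos_left (add_lt_add h hw) hK.pos)

end QD

section distE

variable {d : X → X → ℝ} {K : ℝ} {E : Set X}

lemma distE_lt_iff (hK : QD d K) (hE : E.Nonempty) {x : X} {t : ℝ} :
    distE d E x < t ↔ ∃ e ∈ E, d x e < t := by
  have hbdd : BddBelow (d x '' E) := ⟨0, by rintro _ ⟨e, -, rfl⟩; exact hK.nonneg x e⟩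
  simp only [distE, csInf_lt_iff hbdd (hE.image _), mem_image, exists_exists_and_eq_and]

lemma le_distE (hE : E.Nonempty) {x : X} {c : ℝ} (h : ∀ e ∈ E, c ≤ d x e) : c ≤ distE d E x :=
  le_csInf (hE.image _) (by rintro _ ⟨e, he, rfl⟩; exact h e he)

lemma distE_lt_two_mul (hK : QD d K) (hE : E.Nonempty) {x u : X} {t : ℝ}
    (hx : distE d E x < t) (hu : u ∈ ball d x t) : distE d E u < 2 * K * t := by
  obtain ⟨e, he, hxe⟩ := (distE_lt_iff hK hE).1 hx
  exact (distE_lt_iff hK hE).2 ⟨e, he, hK.triangle_lt (by rwa [hK.comm]) hxe⟩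

lemma div_le_distE_of_mem_ball (hK : QD d K) (hE : E.Nonempty) {c u : X} {ρ : ℝ}
    (hc : ball d c ρ ⊆ Eᶜ) (hu : u ∈ ball d c (ρ / (2 * K))) : ρ / (2 * K) ≤ distE d E u := by
  refine le_distE hE fun e he => not_lt.1 fun hue => hc ?_ he
  have := hK.triangle_lt hu hue
  rwa [mul_div_cancel₀ _ (by linarith [hK.pos])] at this

lemma closure_subset_setOf_distE_lt [TopologicalSpace X] (hK : QD d K) (hE : E.Nonempty)
    (hopen : ∀ x r, IsOpen (ball d x r)) {T : ℝ} (hT : 0 < T) :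
    closure E ⊆ {x | distE d E x < T} := fun x hx => by
  obtain ⟨e, hxe, he⟩ := mem_closure_iff.1 hx _ (hopen x T) (hK.mem_ball_self hT)
  exact (distE_lt_iff hK hE).2 ⟨e, he, hxe⟩

end distE

section hole

variable {d : X → X → ℝ} {K C : ℝ} {E : Set X}

lemma le_hole {x y : X} {r s : ℝ} (hs : 0 < s) (hsr : s ≤ 2 * K * r)
    (hsub : ball d y s ⊆ ball d x r \ E) : s ≤ hole d K E x r :=
  le_csSup ⟨2 * K * r, fun _ h => h.2.1⟩ ⟨hs, hsr, y, hsub⟩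

lemma HoleDoubling.pow_mul (hC : HoleDoubling d K E C) (hC0 : 0 ≤ C) (x : X) (m : ℕ) {r : ℝ}
    (hr : 0 < r) : hole d K E x (2 ^ m * r) ≤ C ^ m * hole d K E x r := by
  induction m generalizing r with
  | zero => simp
  | succ m ih =>
    calc hole d K E x (2 ^ (m + 1) * r) = hole d K E x (2 ^ m * (2 * r)) := by ring_nf
      _ ≤ C ^ m * hole d K E x (2 * r) := ih (by positivity)
      _ ≤ C ^ m * (C * hole d K E x r) := by gcongr; exact hC x r hr
      _ = C ^ (m + 1) * hole d K E x r := by ring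

lemma div_pow_le_hole (hK : QD d K) (hC : HoleDoubling d K E C) (hC0 : 0 < C)
    {c x₀ z : X} {ρ r₀ s : ℝ} {m : ℕ} (hρ : 0 < ρ) (hρr : ρ ≤ 2 * K * r₀)
    (hc : ball d c ρ ⊆ ball d x₀ r₀ \ E) (hz : z ∈ ball d x₀ r₀) (hs : 0 < s)
    (hm : 2 * K * r₀ ≤ 2 ^ m * s) : ρ / C ^ m ≤ hole d K E z s := by
  have hB : ball d x₀ r₀ ⊆ ball d z (2 ^ m * s) :=
    (hK.ball_subset_ball (by rwa [hK.comm] : d z x₀ < r₀)).trans (ball_mono (by linarith))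
  have hρs : ρ ≤ 2 * K * (2 ^ m * s) := by
    nlinarith [hK.1, pow_pos (two_pos : (0 : ℝ) < 2) m]
  rw [div_le_iff₀ (by positivity), mul_comm]
  calc ρ ≤ hole d K E z (2 ^ m * s) :=
        le_hole hρ hρs fun w hw => ⟨hB (hc hw).1, (hc hw).2⟩
    _ ≤ C ^ m * hole d K E z s := hC.pow_mul hC0.le z m hs

end hole

section measure

variable [MeasurableSpace X] {μ : Measure X} {d : X → X → ℝ} {K A : ℝ}

lemma DoublingBalls.measure_ball_two_pow_mul_le (hA : DoublingBalls μ d A) (x : X) (m : ℕ)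
    {s : ℝ} (hs : 0 < s) :
    μ (ball d x (2 ^ m * s)) ≤ ENNReal.ofReal A ^ m * μ (ball d x s) := by
  induction m with
  | zero => simp
  | succ m ih =>
    calc μ (ball d x (2 ^ (m + 1) * s)) = μ (ball d x (2 * (2 ^ m * s))) := by ring_nf
      _ ≤ ENNReal.ofReal A * μ (ball d x (2 ^ m * s)) := (hA x _ (by positivity)).2.2
      _ ≤ ENNReal.ofReal A * (ENNReal.ofReal A ^ m * μ (ball d x s)) := by gcongr
      _ = ENNReal.ofReal A ^ (m + 1) * μ (ball d x s) := by ring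

lemma DoublingBalls.measure_ball_le (hA : DoublingBalls μ d A) (x : X) {m : ℕ} {s S : ℝ}
    (hs : 0 < s) (hS : S ≤ 2 ^ m * s) :
    μ (ball d x S) ≤ ENNReal.ofReal A ^ m * μ (ball d x s) :=
  (measure_mono (ball_mono hS)).trans (hA.measure_ball_two_pow_mul_le x m hs)

lemma DoublingBalls.of_le_of_le_mul {δ : X → X → ℝ} {L : ℝ} (hA : DoublingBalls μ d A)
    (hL : 0 < L) (h : ∀ x y, δ x y ≤ d x y ∧ d x y ≤ L * δ x y) :
    ∃ A', DoublingBalls μ δ A' := by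
  obtain ⟨m, hm⟩ := exists_le_two_pow_mul (2 * L) one_pos
  have hsub : ∀ x r, ball d x r ⊆ ball δ x r := fun x r y hy => (h x y).1.trans_lt hy
  have hsup : ∀ x r, ball δ x r ⊆ ball d x (L * r) := fun x r y hy =>
    (h x y).2.trans_lt (mul_lt_mul_of_pos_left hy hL)
  refine ⟨(ENNReal.ofReal A ^ m).toReal, fun x r hr => ⟨?_, ?_, ?_⟩⟩
  · exact (hA x r hr).1.trans_le (measure_mono (hsub x r))
  · exact (measure_mono (hsup x r)).trans_lt (hA x (L * r) (by positivity)).2.1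
  · rw [ENNReal.ofReal_toReal (pow_ne_top ofReal_ne_top)]
    calc μ (ball δ x (2 * r)) ≤ μ (ball d x (L * (2 * r))) := measure_mono (hsup _ _)
      _ ≤ ENNReal.ofReal A ^ m * μ (ball d x r) := hA.measure_ball_le x hr (by nlinarith)
      _ ≤ ENNReal.ofReal A ^ m * μ (ball δ x r) := by gcongr; exact hsub x r

lemma _root_.Set.PairwiseDisjoint.countable_of_measure_pos {ι : Type*} {D : Set ι}
    {B : ι → Set X} (hdisj : D.PairwiseDisjoint B) (hB : ∀ i ∈ D, MeasurableSet (B i))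
    (hpos : ∀ i ∈ D, 0 < μ (B i)) (hfin : μ (⋃ i ∈ D, B i) ≠ ∞) : D.Countable := by
  have := Measure.countable_meas_pos_of_disjoint_of_meas_iUnion_ne_top μ
    (As := fun i : D => B i) (fun i => hB i i.2)
    (fun i j hij => hdisj i.2 j.2 (Subtype.coe_ne_coe.2 hij)) (by rwa [iUnion_coe_set])
  rw [← countable_coe_iff, ← countable_univ_iff]
  simpa [fun i : D => hpos i i.2] using this

lemma exists_countable_disjoint_cover [TopologicalSpace X] [OpensMeasurableSpace X]
    (hK : QD d K) (hA : DoublingBalls μ d A) (hopen : ∀ x r, IsOpen (ball d x r))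
    {P : Set X} {x₀ : X} {r₀ t : ℝ} (hP : P ⊆ ball d x₀ r₀) (ht : 0 < t) :
    ∃ D ⊆ P, D.Countable ∧ D.PairwiseDisjoint (fun x => ball d x t) ∧
      P ⊆ ⋃ x ∈ D, ball d x (2 * K * t) := by
  obtain ⟨D, hDP, hdisj, hcov⟩ := Vitali.exists_disjoint_subfamily_covering_enlargement
    (fun x => ball d x t) P (fun _ => t) 2 one_lt_two (fun _ _ => ht.le) t (fun _ _ => le_rfl)
    (fun x _ => ⟨x, hK.mem_ball_self ht⟩)
  refine ⟨D, hDP, ?_, hdisj, fun p hp => ?_⟩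
  · rcases D.eq_empty_or_nonempty with rfl | ⟨x, hx⟩
    · exact countable_empty
    have hr₀ : 0 < r₀ := (hK.nonneg _ _).trans_lt (hP (hDP hx))
    refine hdisj.countable_of_measure_pos (fun y _ => (hopen y t).measurableSet)
      (fun y _ => (hA y t ht).1) (ne_top_of_le_ne_top (hA x₀ _ ?_).2.1.ne
        (measure_mono (iUnion₂_subset fun y hy => hK.ball_subset_ball (hP (hDP hy)))))
    have := hK.pos
    positivity
  · obtain ⟨x, hx, ⟨w, hwp, hwx⟩, -⟩ := hcov p hp
    exact mem_biUnion hx (hK.triangle_lt hwx (by rwa [hK.comm]))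

lemma add_mul_measure_le_of_cover {ι : Type*} {D : Set ι} (hD : D.Countable) {P Q : Set X}
    {B U : ι → Set X} {a s : ℝ≥0∞} (hPQ : P ⊆ Q) (hcover : P ⊆ ⋃ i ∈ D, B i)
    (hU : ∀ i ∈ D, MeasurableSet (U i)) (hdisj : D.PairwiseDisjoint U)
    (hUsub : ∀ i ∈ D, U i ⊆ Q \ P) (hmass : ∀ i ∈ D, s * μ (B i) ≤ a * μ (U i)) :
    (a + s) * μ P ≤ a * μ Q := by
  set W := ⋃ i ∈ D, U i
  have hsP : s * μ P ≤ a * μ W :=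
    calc s * μ P ≤ s * ∑' i : D, μ (B i) := by
          gcongr; exact (measure_mono hcover).trans (measure_biUnion_le μ hD B)
      _ = ∑' i : D, s * μ (B i) := ENNReal.tsum_mul_left.symm
      _ ≤ ∑' i : D, a * μ (U i) := ENNReal.tsum_le_tsum fun i => hmass i i.2
      _ = a * μ W := by rw [ENNReal.tsum_mul_left, measure_biUnion hD hdisj hU]
  have hPW : μ P + μ W ≤ μ Q := by
    rw [← measure_union (disjoint_iUnion₂_right.2 fun i hi => disjoint_sdiff_right.mono_right
      (hUsub i hi)) (.biUnion hD hU)]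
    exact measure_mono (union_subset hPQ (iUnion₂_subset fun i hi => (hUsub i hi).trans
      sdiff_subset))
  calc (a + s) * μ P = a * μ P + s * μ P := add_mul _ _ _
    _ ≤ a * μ P + a * μ W := by gcongr
    _ = a * (μ P + μ W) := (mul_add _ _ _).symm
    _ ≤ a * μ Q := by gcongr

lemma measure_eq_zero_of_forall_exists_measure_le_mul {S : ℝ → Set X} {Z : Set X} {q : ℝ≥0∞}
    {r₀ : ℝ} (hr₀ : 0 < r₀) (hq : q < 1) (hfin : μ (S r₀) ≠ ∞) (hZ : ∀ T, 0 < T → Z ⊆ S T)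
    (hstep : ∀ T, 0 < T → T ≤ r₀ → ∃ T', 0 < T' ∧ T' ≤ T ∧ μ (S T') ≤ q * μ (S T)) :
    μ Z = 0 := by
  have hiter : ∀ k : ℕ, ∃ T, 0 < T ∧ T ≤ r₀ ∧ μ (S T) ≤ q ^ k * μ (S r₀) := by
    intro k
    induction k with
    | zero => exact ⟨r₀, hr₀, le_rfl, by simp⟩
    | succ k ih =>
      obtain ⟨T, hT, hTr, hk⟩ := ih
      obtain ⟨T', hT', hT'T, hle⟩ := hstep T hT hTr
      refine ⟨T', hT', hT'T.trans hTr, ?_⟩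
      calc μ (S T') ≤ q * μ (S T) := hle
        _ ≤ q * (q ^ k * μ (S r₀)) := by gcongr
        _ = q ^ (k + 1) * μ (S r₀) := by ring
  have hlim : Tendsto (fun k : ℕ => q ^ k * μ (S r₀)) atTop (𝓝 0) := by
    simpa using ENNReal.Tendsto.mul_const (ENNReal.tendsto_pow_atTop_nhds_zero_of_lt_one hq)
      (Or.inr hfin)
  refine le_antisymm (ge_of_tendsto' hlim fun k => ?_) zero_le
  obtain ⟨T, hT, -, hk⟩ := hiter k
  exact (measure_mono (hZ T hT)).trans hk

end measure

section porosity

variable [MeasurableSpace X] {μ : Measure X} {d : X → X → ℝ} {K A β σ γ C : ℝ} {E : Set X}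

lemma WeaklyPorousWith.exists_ball_subset_diff (hwp : WeaklyPorousWith μ d K E σ γ)
    (hK : QD d K) (hσ : 0 < σ) {x₀ : X} {r₀ : ℝ} (hr₀ : 0 < r₀) (hμ : 0 < μ (ball d x₀ r₀)) :
    ∃ c ρ, 0 < ρ ∧ ρ ≤ 2 * K * r₀ ∧ ball d c ρ ⊆ ball d x₀ r₀ \ E := by
  obtain ⟨n, c, ρ, -, hsub, -, hρr, hmass⟩ := hwp x₀ r₀ hr₀
  have hsum : ∑ i, μ (ball d (c i) (ρ i)) ≠ 0 :=
    ne_of_gt ((ENNReal.mul_pos (ENNReal.ofReal_pos.2 hσ).ne' hμ.ne').trans_le hmass)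
  obtain ⟨i, -, hi⟩ := Finset.exists_ne_zero_of_sum_ne_zero hsum
  obtain ⟨y, hy⟩ := nonempty_of_measure_ne_zero hi
  exact ⟨c i, ρ i, (hK.nonneg _ _).trans_lt hy, hρr i, hsub i⟩

/-- The porosity balls of the interior ball `B(z,βt) ⊆ B(x,t) ∩ B(x₀,r₀)`, shrunk by the
factor `2K`, stay at distance `≥ γh/(2K)` from `E` and, by doubling, still carry a fixed
proportion of `μ(B(x,2Kt))`. -/
lemma exists_large_subset_far_from [TopologicalSpace X] [OpensMeasurableSpace X]
    (hK : QD d K) (hA : DoublingBalls μ d A) (hopen : ∀ x r, IsOpen (ball d x r))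
    (hβ : 0 < β) (hint : InteriorBalls d K β) (hE : E.Nonempty)
    (hwp : WeaklyPorousWith μ d K E σ γ) (hγ : 0 < γ)
    {x₀ x : X} {r₀ t h : ℝ} (hx : x ∈ ball d x₀ r₀) (ht : 0 < t) (htr : t ≤ 2 * K * r₀)
    (hh : 0 < h) (hhole : ∀ z ∈ ball d x₀ r₀, h ≤ hole d K E z (β * t)) {m₁ m₂ : ℕ}
    (hm₁ : K * (1 + 2 * K) ≤ 2 ^ m₁ * β) (hm₂ : 2 * K ≤ 2 ^ m₂) :
    ∃ U, MeasurableSet U ∧ U ⊆ ball d x₀ r₀ ∩ ball d x t ∧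
      (∀ u ∈ U, γ * h / (2 * K) ≤ distE d E u) ∧
      ENNReal.ofReal σ * μ (ball d x (2 * K * t)) ≤ ENNReal.ofReal A ^ (m₁ + m₂) * μ U := by
  have hK2 : 1 ≤ 2 * K := by linarith [hK.1]
  obtain ⟨z, hz⟩ := hint x₀ r₀ t x ((hK.nonneg _ _).trans_lt hx) ht htr hx
  have hzB := hz (hK.mem_ball_self (by positivity))
  obtain ⟨n, c, ρ, hdisj, hsub, hlow, -, hmass⟩ := hwp z (β * t) (by positivity)
  have hρ : ∀ j, γ * h ≤ ρ j := fun j =>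
    (mul_le_mul_of_nonneg_left (hhole z hzB.2) hγ.le).trans (hlow j)
  have hρpos : ∀ j, 0 < ρ j / (2 * K) := fun j => by
    have := (mul_pos hγ hh).trans_le (hρ j); positivity
  set V := fun j => ball d (c j) (ρ j / (2 * K))
  have hVsub : ∀ j, V j ⊆ ball d (c j) (ρ j) := fun j =>
    ball_mono (div_le_self ((mul_pos hγ hh).le.trans (hρ j)) hK2)
  have hVin : ∀ j, V j ⊆ ball d x₀ r₀ ∩ ball d x t := fun j =>
    ((hVsub j).trans ((hsub j).trans sdiff_subset)).trans (hz.trans (inter_comm _ _).subset)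
  have hμV : μ (⋃ j, V j) = ∑ j, μ (V j) := by
    rw [measure_iUnion (fun i j hij => (hdisj i j hij).mono (hVsub i) (hVsub j))
      (fun j => (hopen _ _).measurableSet), tsum_fintype]
  refine ⟨⋃ j, V j, .iUnion fun j => (hopen _ _).measurableSet, iUnion_subset hVin, ?_, ?_⟩
  · simp only [mem_iUnion]
    rintro u ⟨j, hu⟩
    exact (div_le_div_of_nonneg_right (hρ j) (by positivity)).trans
      (div_le_distE_of_mem_ball hK hE (fun w hw => ((hsub j) hw).2) hu)
  · have hxz : ball d x (2 * K * t) ⊆ ball d z (K * (t + 2 * K * t)) :=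
      hK.ball_subset_ball (by rw [hK.comm]; exact hzB.1)
    have hball : μ (ball d x (2 * K * t)) ≤ ENNReal.ofReal A ^ m₁ * μ (ball d z (β * t)) :=
      (measure_mono hxz).trans (hA.measure_ball_le z (by positivity) (by nlinarith))
    have hshrink : ∀ j, μ (ball d (c j) (ρ j)) ≤ ENNReal.ofReal A ^ m₂ * μ (V j) := fun j =>
      hA.measure_ball_le (c j) (hρpos j) <| calc
        ρ j = 2 * K * (ρ j / (2 * K)) := (mul_div_cancel₀ _ (by positivity)).symm
        _ ≤ 2 ^ m₂ * (ρ j / (2 * K)) := by gcongr; exact (hρpos j).le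
    calc ENNReal.ofReal σ * μ (ball d x (2 * K * t))
        ≤ ENNReal.ofReal A ^ m₁ * (ENNReal.ofReal σ * μ (ball d z (β * t))) := by
          rw [mul_left_comm]; gcongr
      _ ≤ ENNReal.ofReal A ^ m₁ * ∑ j, ENNReal.ofReal A ^ m₂ * μ (V j) := by
          gcongr
          exact hmass.trans (Finset.sum_le_sum fun j _ => hshrink j)
      _ = ENNReal.ofReal A ^ (m₁ + m₂) * μ (⋃ j, V j) := by
          rw [← Finset.mul_sum, hμV, pow_add, mul_assoc]

lemma exists_measure_inter_distE_lt_le [TopologicalSpace X] [OpensMeasurableSpace X]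
    (hK : QD d K) (hA : DoublingBalls μ d A) (hopen : ∀ x r, IsOpen (ball d x r))
    (hβ : 0 < β) (hint : InteriorBalls d K β) (hE : E.Nonempty)
    (hwp : WeaklyPorousWith μ d K E σ γ) (hγ : 0 < γ)
    (hC : HoleDoubling d K E C) (hC0 : 0 < C) {c x₀ : X} {ρ r₀ : ℝ} (hρ : 0 < ρ)
    (hρr : ρ ≤ 2 * K * r₀) (hc : ball d c ρ ⊆ ball d x₀ r₀ \ E) {m₁ m₂ : ℕ}
    (hm₁ : K * (1 + 2 * K) ≤ 2 ^ m₁ * β) (hm₂ : 2 * K ≤ 2 ^ m₂) {T : ℝ} (hT : 0 < T)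
    (hTr : T ≤ r₀) :
    ∃ T', 0 < T' ∧ T' ≤ T ∧
      (ENNReal.ofReal A ^ (m₁ + m₂) + ENNReal.ofReal σ) *
          μ (ball d x₀ r₀ ∩ {x | distE d E x < T'}) ≤
        ENNReal.ofReal A ^ (m₁ + m₂) * μ (ball d x₀ r₀ ∩ {x | distE d E x < T}) := by
  have hK2 : 0 < 2 * K := by linarith [hK.pos]
  set t := T / (2 * K)
  have ht : 0 < t := by positivity
  have hTt : 2 * K * t = T := mul_div_cancel₀ _ hK2.ne'
  have htT : t ≤ T := div_le_self hT.le (by linarith [hK.1])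
  have htr : t ≤ 2 * K * r₀ := by nlinarith [hK.1]
  obtain ⟨m₃, hm₃⟩ := exists_le_two_pow_mul (2 * K * r₀) (mul_pos hβ ht)
  set h := ρ / C ^ m₃
  set T' := min (γ * h / (2 * K)) t
  have hT'T : T' ≤ T := (min_le_right _ _).trans htT
  have hpiece : ∀ x ∈ ball d x₀ r₀ ∩ {x | distE d E x < T'}, ∃ U, MeasurableSet U ∧
      U ⊆ ball d x₀ r₀ ∩ ball d x t ∧ (∀ u ∈ U, γ * h / (2 * K) ≤ distE d E u) ∧
      ENNReal.ofReal σ * μ (ball d x (2 * K * t)) ≤ ENNReal.ofReal A ^ (m₁ + m₂) * μ U :=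
    fun x hx => exists_large_subset_far_from hK hA hopen hβ hint hE hwp hγ hx.1 ht htr
      (by positivity) (fun z hz => div_pow_le_hole hK hC hC0 hρ hρr hc hz (mul_pos hβ ht) hm₃)
      hm₁ hm₂
  choose! U hUm hUsub hUfar hUmass using hpiece
  obtain ⟨D, hDP, hDc, hDdisj, hDcover⟩ :=
    exists_countable_disjoint_cover hK hA hopen (inter_subset_left (t := {x | distE d E x < T'})) ht
  refine ⟨T', lt_min (by positivity) ht, hT'T, add_mul_measure_le_of_cover hDc
    (inter_subset_inter_right _ fun x hx => lt_of_lt_of_le hx hT'T) hDcover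
    (fun x hx => hUm x (hDP hx))
    (hDdisj.mono_on fun x hx => (hUsub x (hDP hx)).trans inter_subset_right)
    (fun x hx u hu => ?_) (fun x hx => hUmass x (hDP hx))⟩
  obtain ⟨huB, hux⟩ := hUsub x (hDP hx) hu
  refine ⟨⟨huB, ?_⟩, fun hu' => (hUfar x (hDP hx) u hu).not_gt (hu'.2.trans_le (min_le_left _ _))⟩
  rw [← hTt]
  exact distE_lt_two_mul hK hE ((hDP hx).2.trans_le (min_le_right _ _)) hux

lemma measure_closure_inter_ball_eq_zero [TopologicalSpace X] [OpensMeasurableSpace X]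
    (hK : QD d K) (hA : DoublingBalls μ d A) (hopen : ∀ x r, IsOpen (ball d x r))
    (hβ : 0 < β) (hint : InteriorBalls d K β) (hE : E.Nonempty)
    (hwp : WeaklyPorousWith μ d K E σ γ) (hσ : 0 < σ) (hγ : 0 < γ)
    (hC : HoleDoubling d K E C) (hC0 : 0 < C) {x₀ : X} {r₀ : ℝ} (hr₀ : 0 < r₀) :
    μ (closure E ∩ ball d x₀ r₀) = 0 := by
  obtain ⟨c, ρ, hρ, hρr, hc⟩ := hwp.exists_ball_subset_diff hK hσ hr₀ (hA x₀ r₀ hr₀).1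
  obtain ⟨m₁, hm₁⟩ := exists_le_two_pow_mul (K * (1 + 2 * K)) hβ
  obtain ⟨m₂, hm₂⟩ : ∃ m : ℕ, 2 * K ≤ 2 ^ m := by simpa using exists_le_two_pow_mul (2 * K) one_pos
  set a := ENNReal.ofReal A ^ (m₁ + m₂)
  have ha : a ≠ ∞ := pow_ne_top ofReal_ne_top
  have hs : ENNReal.ofReal σ ≠ 0 := (ENNReal.ofReal_pos.2 hσ).ne'
  have hq : a / (a + ENNReal.ofReal σ) < 1 := by
    rw [ENNReal.div_lt_iff (Or.inl (by simp [hs]))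
      (Or.inl (ENNReal.add_ne_top.2 ⟨ha, ofReal_ne_top⟩)), one_mul]
    exact ENNReal.lt_add_right ha hs
  refine measure_eq_zero_of_forall_exists_measure_le_mul
    (S := fun T => ball d x₀ r₀ ∩ {x | distE d E x < T}) hr₀ hq
    (ne_top_of_le_ne_top (hA x₀ r₀ hr₀).2.1.ne (measure_mono inter_subset_left))
    (fun T hT x hx => ⟨hx.2, closure_subset_setOf_distE_lt hK hE hopen hT hx.1⟩)
    fun T hT hTr => ?_
  obtain ⟨T', hT', hT'T, hle⟩ := exists_measure_inter_distE_lt_le hK hA hopen hβ hint hE hwp hγ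
    hC hC0 hρ hρr hc hm₁ hm₂ hT hTr
  exact ⟨T', hT', hT'T, le_div_add_mul_of_add_mul_le ha hs ofReal_ne_top hle⟩

end porosity

theorem statement14_general {X : Type*} [TopologicalSpace X] [MeasurableSpace X] [BorelSpace X]
    (μ : Measure X) (d δ : X → X → ℝ) (K Kδ A β : ℝ)
    (hd : QD d K) (hδ : QD δ Kδ) (hA : DoublingBalls μ d A)
    (hopenδ : ∀ x r, IsOpen (ball δ x r))
    (hequiv : ∀ x y, δ x y ≤ d x y ∧ d x y ≤ 3 * K ^ 2 * δ x y)
    (hβ : β ∈ Set.Ioo (0:ℝ) 1)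
    (hint : ∀ x r t y, 0 < r → 0 < t → t ≤ 2 * Kδ * r → y ∈ ball δ x r →
      ∃ z, ball δ z (β * t) ⊆ ball δ y t ∩ ball δ x r)
    (E : Set X) (hE : E.Nonempty)
    (hwp : WeaklyPorous μ δ Kδ E) (hdbl : ∃ C, 0 < C ∧ HoleDoubling δ Kδ E C) :
    μ (closure E) = 0 := by
  obtain ⟨σ, γ, hσ, hγ, hwp⟩ := hwp
  obtain ⟨C, hC0, hC⟩ := hdbl
  obtain ⟨Aδ, hAδ⟩ := hA.of_le_of_le_mul (by have := hd.pos; positivity) hequiv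
  obtain ⟨e, he⟩ := hE
  have hcover : closure E ⊆ ⋃ n : ℕ, closure E ∩ ball δ e (n + 1) := fun x hx => by
    obtain ⟨n, hn⟩ := exists_nat_gt (δ e x)
    exact mem_iUnion.2 ⟨n, hx, show δ e x < n + 1 by linarith⟩
  exact measure_mono_null hcover (measure_iUnion_null fun n =>
    measure_closure_inter_ball_eq_zero hδ hAδ hopenδ hβ.1 hint ⟨e, he⟩ hwp hσ.1 hγ.1 hC hC0
      (by positivity))

/-- If `E` is weakly porous w.r.t. the Macías–Segovia quasi-distance `δ` (equivalent
to `d` with `δ ≤ d ≤ 3K_d²δ`, open balls and the uniform interior-ball property)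
and `ρ_{δ,E}` is doubling, then `μ(closure E) = 0`. -/
theorem statement14 {X : Type*} [TopologicalSpace X] [MeasurableSpace X] [BorelSpace X]
    (μ : Measure X) (d δ : X → X → ℝ) (K Kδ A β : ℝ)
    (hd : QD d K) (hδ : QD δ Kδ) (hb : BallsBasis d) (hA : DoublingBalls μ d A)
    (hopenδ : ∀ x r, IsOpen (ball δ x r))
    (hequiv : ∀ x y, δ x y ≤ d x y ∧ d x y ≤ 3 * K ^ 2 * δ x y)
    (hβ : β ∈ Set.Ioo (0:ℝ) 1)
    (hint : ∀ x r t y, 0 < r → 0 < t → t ≤ 2 * Kδ * r → y ∈ ball δ x r →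
      ∃ z, ball δ z (β * t) ⊆ ball δ y t ∩ ball δ x r)
    (E : Set X) (hE : E.Nonempty)
    (hwp : WeaklyPorous μ δ Kδ E) (hdbl : ∃ C, 0 < C ∧ HoleDoubling δ Kδ E C) :
    μ (closure E) = 0 :=
  statement14_general μ d δ K Kδ A β hd hδ hA hopenδ hequiv hβ hint E hE hwp hdbl

end WPA1
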